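/- arXiv:1410.8283 — 2 statements merged into one kernel-verified Lean document; each statement's English description precedes it below -/
import Mathlib

section
/- Let p ≥ 4 and f ∈ C²(𝔹ⁿ; ℂ). Then at every point of 𝔹ⁿ, Δ(|f|^p) = p(p−2)|f|^{p−4} Σ_{k=1}^n |f_{z_k}·conj(f) + conj(f_{z̄_k})·f|² + 2p|f|^{p−2}‖D_f‖² + p|f|^{p−2} Re(f·conj(Δf)); in particular, if Re(f·conj(Δf)) ≥ 0 on 𝔹ⁿ, then Δ(|f|^p) ≥ 0 on 𝔹ⁿ. -/
open MeasureTheory Metric Complex Set Asymptotics ComplexConjugate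

noncomputable section

instance (n : ℕ) : MeasurableSpace (EuclideanSpace ℂ (Fin n)) := borel _
instance (n : ℕ) : BorelSpace (EuclideanSpace ℂ (Fin n)) := ⟨rfl⟩

/-- The `k`-th coordinate direction (real direction). -/
def eR (n : ℕ) (k : Fin n) : EuclideanSpace ℂ (Fin n) := EuclideanSpace.single k 1

/-- The `k`-th coordinate direction multiplied by `I` (imaginary direction). -/
def eI (n : ℕ) (k : Fin n) : EuclideanSpace ℂ (Fin n) := EuclideanSpace.single k Complex.I

/-- Wirtinger derivative `f_{z_k} = (∂f/∂x_k − i ∂f/∂y_k)/2`. -/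
def wz {n : ℕ} (f : EuclideanSpace ℂ (Fin n) → ℂ) (k : Fin n)
    (z : EuclideanSpace ℂ (Fin n)) : ℂ :=
  (fderiv ℝ f z (eR n k) - Complex.I * fderiv ℝ f z (eI n k)) / 2

/-- Wirtinger derivative `f_{z̄_k} = (∂f/∂x_k + i ∂f/∂y_k)/2`. -/
def wzb {n : ℕ} (f : EuclideanSpace ℂ (Fin n) → ℂ) (k : Fin n)
    (z : EuclideanSpace ℂ (Fin n)) : ℂ :=
  (fderiv ℝ f z (eR n k) + Complex.I * fderiv ℝ f z (eI n k)) / 2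

/-- The Laplacian `Δ = Σ_k (∂²/∂x_k² + ∂²/∂y_k²) = 4 Σ_k ∂²/∂z_k∂z̄_k`. -/
def lap {n : ℕ} {F : Type*} [NormedAddCommGroup F] [NormedSpace ℝ F]
    (f : EuclideanSpace ℂ (Fin n) → F) (z : EuclideanSpace ℂ (Fin n)) : F :=
  ∑ k : Fin n, (fderiv ℝ (fun w => fderiv ℝ f w (eR n k)) z (eR n k)
    + fderiv ℝ (fun w => fderiv ℝ f w (eI n k)) z (eI n k))

/-- `‖D_f(z)‖ = (‖∇f(z)‖² + ‖∇̄f(z)‖²)^{1/2}`, the Hilbert-Schmidt semi-norm. -/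
def Dnorm {n : ℕ} (f : EuclideanSpace ℂ (Fin n) → ℂ) (z : EuclideanSpace ℂ (Fin n)) : ℝ :=
  Real.sqrt (∑ k : Fin n, (‖wz f k z‖ ^ 2 + ‖wzb f k z‖ ^ 2))

/-- `D*_f`, built from all second-order Wirtinger derivatives. -/
def Dstar {n : ℕ} (f : EuclideanSpace ℂ (Fin n) → ℂ) (z : EuclideanSpace ℂ (Fin n)) : ℝ :=
  Real.sqrt (∑ j : Fin n, ∑ k : Fin n,
    (‖wz (wz f k) j z‖ ^ 2 + ‖wzb (wz f k) j z‖ ^ 2 +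
      ‖wz (wzb f k) j z‖ ^ 2 + ‖wzb (wzb f k) j z‖ ^ 2))

/-- Normalized Lebesgue volume measure `dV_N` on the unit ball of `ℂⁿ`. -/
def volN (n : ℕ) : Measure (EuclideanSpace ℂ (Fin n)) :=
  (volume (ball (0 : EuclideanSpace ℂ (Fin n)) 1))⁻¹ •
    (volume : Measure (EuclideanSpace ℂ (Fin n))).restrict (ball 0 1)

/-- Normalized surface measure `dσ` on the unit sphere of `ℂⁿ`. -/
def sphereN (n : ℕ) : Measure (sphere (0 : EuclideanSpace ℂ (Fin n)) 1) :=
  ((volume : Measure (EuclideanSpace ℂ (Fin n))).toSphere univ)⁻¹ •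
    (volume : Measure (EuclideanSpace ℂ (Fin n))).toSphere

/-- Membership in the generalized Hardy space `H_g^p`: `sup_{0<r<1} M_p(r,f)^p < ∞`. -/
def HgMem {n : ℕ} (p : ℝ) (f : EuclideanSpace ℂ (Fin n) → ℂ) : Prop :=
  (⨆ r ∈ Ioo (0 : ℝ) 1,
    ∫⁻ ζ, ENNReal.ofReal (‖f (r • (ζ : EuclideanSpace ℂ (Fin n)))‖ ^ p) ∂(sphereN n)) < ⊤

/-- Integral mean `M_p(r, g)` of a nonnegative function `g : 𝔹ⁿ → ℝ`. -/
def Mp {n : ℕ} (p r : ℝ) (g : EuclideanSpace ℂ (Fin n) → ℝ) : ℝ :=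
  (∫ ζ, g (r • (ζ : EuclideanSpace ℂ (Fin n))) ^ p ∂(sphereN n)) ^ (1 / p)

/-! Differentiating `‖x‖ ^ p`, whose derivative is `p ‖x‖ ^ (p - 2) ⟪x, ·⟫`, twice along a real
direction `v` gives
`D_v² ‖f‖ ^ p = p (p - 2) ‖f‖ ^ (p - 4) ⟪f, D_v f⟫² + p ‖f‖ ^ (p - 2) (‖D_v f‖² + ⟪f, D_v² f⟫)`;
the second step needs `‖x‖ ^ (p - 2)` to be differentiable at `0`, i.e. `p > 3`.
Summing over `v = e_k` and `v = i e_k`, the Wirtinger derivatives turn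
`⟪f, D_{e_k} f⟫² + ⟪f, D_{i e_k} f⟫²` into `|f_{z_k} f̄ + conj (f_{z̄_k}) f|²` and
`‖D_{e_k} f‖² + ‖D_{i e_k} f‖²` into `2 (|f_{z_k}|² + |f_{z̄_k}|²)`. For `p ≥ 2` every term
of the resulting formula except the last is nonnegative. -/

open scoped InnerProductSpace Topology

section NormRpow

variable {E F : Type*} [NormedAddCommGroup E] [NormedSpace ℝ E]
  [NormedAddCommGroup F] [InnerProductSpace ℝ F] {f : E → F} {z : E} {p : ℝ}

theorem HasFDerivAt.norm_rpow {f' : E →L[ℝ] F} (hf : HasFDerivAt f f' z) (hp : 1 < p) :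
    HasFDerivAt (fun w => ‖f w‖ ^ p) ((p * ‖f z‖ ^ (p - 2)) • (innerSL ℝ (f z)).comp f') z :=
  (hasFDerivAt_norm_rpow (f z) hp).comp z hf

theorem fderiv_norm_rpow_apply (hf : DifferentiableAt ℝ f z) (hp : 1 < p) (v : E) :
    fderiv ℝ (fun w => ‖f w‖ ^ p) z v = p * ‖f z‖ ^ (p - 2) * ⟪f z, fderiv ℝ f z v⟫_ℝ := by
  simp [(hf.hasFDerivAt.norm_rpow hp).fderiv, mul_assoc]

theorem fderiv_fderiv_norm_rpow_apply (hf : ContDiffAt ℝ 2 f z) (hp : 3 < p) (v : E) :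
    fderiv ℝ (fun w => fderiv ℝ (fun w => ‖f w‖ ^ p) w v) z v =
      p * (p - 2) * ‖f z‖ ^ (p - 4) * ⟪f z, fderiv ℝ f z v⟫_ℝ ^ 2 +
        p * ‖f z‖ ^ (p - 2) *
          (‖fderiv ℝ f z v‖ ^ 2 + ⟪f z, fderiv ℝ (fun w => fderiv ℝ f w v) z v⟫_ℝ) := by
  have hfirst : (fun w => fderiv ℝ (fun w => ‖f w‖ ^ p) w v) =ᶠ[𝓝 z]
      fun w => p * ‖f w‖ ^ (p - 2) * ⟪f w, fderiv ℝ f w v⟫_ℝ :=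
    (hf.eventually (by simp)).mono fun w hw =>
      fderiv_norm_rpow_apply (hw.differentiableAt (by norm_num)) (by linarith) v
  have hDf : HasFDerivAt f (fderiv ℝ f z) z := (hf.differentiableAt (by norm_num)).hasFDerivAt
  have hDvf : HasFDerivAt (fun w => fderiv ℝ f w v) (fderiv ℝ (fun w => fderiv ℝ f w v) z) z :=
    (((hf.fderiv_right (m := 1) le_rfl).differentiableAt one_ne_zero).clm_apply
      (differentiableAt_const v)).hasFDerivAt
  have hsecond : HasFDerivAt (fun w => p * ‖f w‖ ^ (p - 2) * ⟪f w, fderiv ℝ f w v⟫_ℝ) _ z :=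
    ((hDf.norm_rpow (p := p - 2) (by linarith)).const_mul p).mul (hDf.inner ℝ hDvf)
  rw [hfirst.fderiv_eq, hsecond.fderiv]
  simp only [add_apply, smul_apply,
    ContinuousLinearMap.comp_apply, ContinuousLinearMap.prod_apply, fderivInnerCLM_apply,
    coe_innerSL_apply, real_inner_self_eq_norm_sq, smul_eq_mul, show p - 2 - 2 = p - 4 by ring]
  ring

end NormRpow

namespace Complex

theorem sq_norm_wirtinger_add (x y : ℂ) :
    ‖(x - I * y) / 2‖ ^ 2 + ‖(x + I * y) / 2‖ ^ 2 = (‖x‖ ^ 2 + ‖y‖ ^ 2) / 2 := by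
  simp only [Complex.sq_norm, normSq_apply, div_re, div_im, sub_re, sub_im, add_re, add_im, mul_re,
    mul_im, I_re, I_im, re_ofNat, im_ofNat]
  ring

theorem sq_norm_wirtinger_mul_conj_add (F x y : ℂ) :
    ‖(x - I * y) / 2 * conj F + conj ((x + I * y) / 2) * F‖ ^ 2 = ⟪F, x⟫_ℝ ^ 2 + ⟪F, y⟫_ℝ ^ 2 := by
  simp only [Complex.inner, Complex.sq_norm, normSq_apply, div_re, div_im, sub_re, sub_im, add_re,
    add_im, mul_re, mul_im, I_re, I_im, re_ofNat, im_ofNat, conj_re, conj_im,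
    map_add, map_div₀, map_mul, conj_I, conj_ofNat, neg_re, neg_im]
  ring

end Complex

theorem lap_norm_rpow {n : ℕ} {f : EuclideanSpace ℂ (Fin n) → ℂ} {z : EuclideanSpace ℂ (Fin n)}
    (hf : ContDiffAt ℝ 2 f z) {p : ℝ} (hp : 3 < p) :
    lap (fun w => ‖f w‖ ^ p) z =
      p * (p - 2) * ‖f z‖ ^ (p - 4) *
          (∑ k : Fin n, ‖wz f k z * conj (f z) + conj (wzb f k z) * f z‖ ^ 2) +
        2 * p * ‖f z‖ ^ (p - 2) * Dnorm f z ^ 2 +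
        p * ‖f z‖ ^ (p - 2) * (f z * conj (lap f z)).re := by
  have hDnorm : Dnorm f z ^ 2 = ∑ k : Fin n, (‖wz f k z‖ ^ 2 + ‖wzb f k z‖ ^ 2) :=
    Real.sq_sqrt (by positivity)
  have hre : ∀ a : ℂ, (f z * conj a).re = ⟪f z, a⟫_ℝ := fun a => by
    rw [Complex.inner, ← Complex.conj_re, map_mul, Complex.conj_conj, mul_comm]
  simp only [lap, hDnorm, map_sum, Complex.re_sum, Finset.mul_sum, ← Finset.sum_add_distrib]
  refine Finset.sum_congr rfl fun k _ => ?_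
  rw [fderiv_fderiv_norm_rpow_apply hf hp, fderiv_fderiv_norm_rpow_apply hf hp, wz, wzb,
    Complex.sq_norm_wirtinger_mul_conj_add, Complex.sq_norm_wirtinger_add, map_add, mul_add (f z),
    Complex.add_re, hre, hre]
  ring

theorem laplacian_abs_pow_formula_general
    (n : ℕ) (p : ℝ) (hp : 4 ≤ p)
    (f : EuclideanSpace ℂ (Fin n) → ℂ)
    (hf : ContDiffOn ℝ 2 f (ball 0 1)) :
    (∀ z ∈ ball (0 : EuclideanSpace ℂ (Fin n)) 1,
      lap (fun w => ‖f w‖ ^ p) z =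
        p * (p - 2) * ‖f z‖ ^ (p - 4) *
            (∑ k : Fin n, ‖wz f k z * conj (f z) + conj (wzb f k z) * f z‖ ^ 2) +
          2 * p * ‖f z‖ ^ (p - 2) * Dnorm f z ^ 2 +
          p * ‖f z‖ ^ (p - 2) * (f z * conj (lap f z)).re) ∧
    ((∀ z ∈ ball (0 : EuclideanSpace ℂ (Fin n)) 1, 0 ≤ (f z * conj (lap f z)).re) →
      ∀ z ∈ ball (0 : EuclideanSpace ℂ (Fin n)) 1, 0 ≤ lap (fun w => ‖f w‖ ^ p) z) := by
  have hformula : ∀ z ∈ ball (0 : EuclideanSpace ℂ (Fin n)) 1, _ := fun z hz =>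
    lap_norm_rpow (hf.contDiffAt (isOpen_ball.mem_nhds hz)) (p := p) (by linarith)
  refine ⟨hformula, fun hpos z hz => ?_⟩
  rw [hformula z hz]
  have hp0 : 0 ≤ p := by linarith
  have hp2 : 0 ≤ p - 2 := by linarith
  have hfz := hpos z hz
  exact add_nonneg (add_nonneg (mul_nonneg (by bound) (by positivity)) (by bound)) (by bound)

theorem laplacian_abs_pow_formula
    (n : ℕ) (hn : 1 ≤ n) (p : ℝ) (hp : 4 ≤ p)
    (f : EuclideanSpace ℂ (Fin n) → ℂ)
    (hf : ContDiffOn ℝ 2 f (ball 0 1)) :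
    (∀ z ∈ ball (0 : EuclideanSpace ℂ (Fin n)) 1,
      lap (fun w => ‖f w‖ ^ p) z =
        p * (p - 2) * ‖f z‖ ^ (p - 4) *
            (∑ k : Fin n, ‖wz f k z * conj (f z) + conj (wzb f k z) * f z‖ ^ 2) +
          2 * p * ‖f z‖ ^ (p - 2) * Dnorm f z ^ 2 +
          p * ‖f z‖ ^ (p - 2) * (f z * conj (lap f z)).re) ∧
    ((∀ z ∈ ball (0 : EuclideanSpace ℂ (Fin n)) 1, 0 ≤ (f z * conj (lap f z)).re) →
      ∀ z ∈ ball (0 : EuclideanSpace ℂ (Fin n)) 1, 0 ≤ lap (fun w => ‖f w‖ ^ p) z) :=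
  laplacian_abs_pow_formula_general n p hp f hf
end
end

section
/- Let λ₁, …, λ_n be real constants, α ≥ 0, p ≥ 4, and let f ∈ C²(𝔹ⁿ; ℂ) satisfy ∂f/∂z̄_k = λ_k |f|^α on 𝔹ⁿ for every k ∈ {1,…,n}. Then at every point of 𝔹ⁿ, Δ(|f|^p) ≥ [4p − (2−α)²]·|f|^{p+2α−2}·Σ_{k=1}^n λ_k². -/
open MeasureTheory Metric Complex Set Asymptotics ComplexConjugate

noncomputable section

/-!
On the real plane of the `k`-th coordinate, `∂²/∂x_k² + ∂²/∂y_k² = 4 ∂²/∂z_k∂z̄_k`, so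
differentiating the equation `f_{z̄_k} = λ_k |f|^α` expresses this part of `Δ f` through first
derivatives of `f`. The chain rule then turns `Δ_k |f|^p` into a quadratic expression in `f_{z_k}`
whose excess over `(4p - (2 - α)²) λ_k² |f|^{p+2α-2}` is
`|f|^{p-6} |p f̄² f_{z_k} + (p - 2 + α) λ_k |f|^{α+2}|² ≥ 0` where `f ≠ 0`.
At the zeros of `f` both sides vanish because `p > 3`.
-/

open scoped InnerProductSpace Topology

section

variable {E : Type*} [NormedAddCommGroup E] [NormedSpace ℝ E]

def sndDirDeriv {G : Type*} [NormedAddCommGroup G] [NormedSpace ℝ G] (h : E → G) (v z : E) : G :=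
  fderiv ℝ (fun w => fderiv ℝ h w v) z v

def wirtingerBar (f : E → ℂ) (v₁ v₂ z : E) : ℂ :=
  (fderiv ℝ f z v₁ + I * fderiv ℝ f z v₂) / 2

theorem hasFDerivAt_norm_rpow_of_ne_zero {F : Type*} [NormedAddCommGroup F] [InnerProductSpace ℝ F]
    {x : F} (hx : x ≠ 0) (p : ℝ) :
    HasFDerivAt (fun x : F => ‖x‖ ^ p) ((p * ‖x‖ ^ (p - 2)) • innerSL ℝ x) x := by
  convert ((hasStrictFDerivAt_norm_sq x).rpow_const (p := p / 2) (by simp [hx])).hasFDerivAt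
    using 1
  · ext y
    rw [← Real.rpow_natCast_mul (norm_nonneg _)]
    congr 1
    ring
  · simp_rw [← Real.rpow_natCast_mul (norm_nonneg _), ← Nat.cast_smul_eq_nsmul ℝ, smul_smul]
    ring_nf

theorem sndDirDeriv_norm_rpow {F : Type*} [NormedAddCommGroup F] [InnerProductSpace ℝ F]
    {f : E → F} {z v : E} {p : ℝ} (hp : 3 < p)
    (hf : ∀ᶠ w in 𝓝 z, DifferentiableAt ℝ f w)
    (hf' : DifferentiableAt ℝ (fun w => fderiv ℝ f w v) z) :
    sndDirDeriv (fun w => ‖f w‖ ^ p) v z =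
      p * (p - 2) * ‖f z‖ ^ (p - 4) * ⟪f z, fderiv ℝ f z v⟫_ℝ ^ 2 +
        p * ‖f z‖ ^ (p - 2) * (‖fderiv ℝ f z v‖ ^ 2 + ⟪f z, sndDirDeriv f v z⟫_ℝ) := by
  have hfirst : (fun w => fderiv ℝ (fun y => ‖f y‖ ^ p) w v) =ᶠ[𝓝 z]
      fun w => p * ‖f w‖ ^ (p - 2) * ⟪f w, fderiv ℝ f w v⟫_ℝ := by
    filter_upwards [hf] with w hw
    have hnorm : HasFDerivAt (fun y => ‖f y‖ ^ p) _ w :=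
      (hasFDerivAt_norm_rpow (f w) (by linarith)).comp w hw.hasFDerivAt
    rw [hnorm.fderiv]
    simp [mul_assoc]
  have hfz := hf.self_of_nhds.hasFDerivAt
  have hsnd : HasFDerivAt (fun w => p * ‖f w‖ ^ (p - 2) * ⟪f w, fderiv ℝ f w v⟫_ℝ) _ z :=
    (((hasFDerivAt_norm_rpow (f z) (by linarith : 1 < p - 2)).comp z hfz).const_mul p).mul
      (hfz.inner ℝ hf'.hasFDerivAt)
  simp only [sndDirDeriv]
  rw [hfirst.fderiv_eq, hsnd.fderiv]
  simp only [Function.comp_apply, ContinuousLinearMap.smul_comp, add_apply, smul_apply,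
    ContinuousLinearMap.comp_apply, ContinuousLinearMap.prod_apply, fderivInnerCLM_apply,
    inner_self_eq_norm_sq_to_K, Real.ringHom_apply, smul_eq_mul, coe_innerSL_apply]
  ring_nf

theorem sndDirDeriv_add_sndDirDeriv_eq_fderiv_wirtingerBar {f : E → ℂ} {z : E}
    (hf : ContDiffAt ℝ 2 f z) (v₁ v₂ : E) :
    sndDirDeriv f v₁ z + sndDirDeriv f v₂ z =
      2 * (fderiv ℝ (wirtingerBar f v₁ v₂) z v₁ - I * fderiv ℝ (wirtingerBar f v₁ v₂) z v₂) := by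
  have hd : HasFDerivAt (fderiv ℝ f) (fderiv ℝ (fderiv ℝ f) z) z :=
    ((hf.fderiv_right le_rfl).differentiableAt one_ne_zero).hasFDerivAt
  have happly : ∀ u, HasFDerivAt (fun w => fderiv ℝ f w u)
      ((ContinuousLinearMap.apply ℝ ℂ u).comp (fderiv ℝ (fderiv ℝ f) z)) z := fun u =>
    (ContinuousLinearMap.apply ℝ ℂ u).hasFDerivAt.comp z hd
  have hbar : HasFDerivAt (fun w => (fderiv ℝ f w v₁ + I * fderiv ℝ f w v₂) * 2⁻¹) _ z :=
    ((happly v₁).add ((happly v₂).const_mul I)).mul_const (2⁻¹ : ℂ)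
  have hsymm := hf.isSymmSndFDerivAt (by simp) v₁ v₂
  have hbar_eq :
      wirtingerBar f v₁ v₂ = fun w => (fderiv ℝ f w v₁ + I * fderiv ℝ f w v₂) * 2⁻¹ := by
    funext w
    simp [wirtingerBar, div_eq_mul_inv]
  simp only [sndDirDeriv, hbar_eq, (happly _).fderiv, hbar.fderiv,
    ContinuousLinearMap.comp_apply, ContinuousLinearMap.apply_apply, smul_add, add_apply,
    smul_apply, smul_eq_mul]
  linear_combination -I * hsymm + fderiv ℝ (fderiv ℝ f) z v₂ v₂ * I_sq

theorem mul_sq_mul_norm_sq_le_of_add_I_mul_eq {F a b : ℂ} {c p α : ℝ} (hF : F ≠ 0)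
    (hab : a + I * b = 2 * c) :
    (4 * p - (2 - α) ^ 2) * c ^ 2 * ‖F‖ ^ 2 ≤
      p * (p - 2) * (⟪F, a⟫_ℝ ^ 2 + ⟪F, b⟫_ℝ ^ 2) + p * ‖F‖ ^ 2 * (‖a‖ ^ 2 + ‖b‖ ^ 2) +
        2 * p * α * c * ⟪F, ⟪F, a⟫_ℝ - I * ⟪F, b⟫_ℝ⟫_ℝ := by
  have hb : b = I * (a - 2 * c) := by linear_combination (-I) * hab + b * I_sq
  subst hb
  have hF2 : 0 < ‖F‖ ^ 2 := by positivity
  rw [← sub_nonneg, ← mul_nonneg_iff_of_pos_left hF2]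
  set x := F.re
  set y := F.im
  -- `‖F‖²` times the difference is `|W|²` for `W = p F̄² (a - c) + (p - 2 + α) c ‖F‖²`,
  -- where `a - c = f_z`
  convert add_nonneg
    (sq_nonneg (p * ((x ^ 2 - y ^ 2) * (a.re - c) + 2 * x * y * a.im) +
      (p - 2 + α) * c * (x ^ 2 + y ^ 2)))
    (sq_nonneg (p * ((x ^ 2 - y ^ 2) * a.im - 2 * x * y * (a.re - c)))) using 1
  simp only [Complex.inner, Complex.sq_norm, normSq_apply, mul_re, mul_im, conj_re, conj_im,
    I_re, I_im, sub_re, sub_im, ofReal_re, ofReal_im, re_ofNat, im_ofNat]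
  ring

theorem sndDirDeriv_add_sndDirDeriv_of_wirtingerBar_eq {f : E → ℂ} {z v₁ v₂ : E} {l α : ℝ}
    (hf : ContDiffAt ℝ 2 f z) (hz : f z ≠ 0)
    (hpde : wirtingerBar f v₁ v₂ =ᶠ[𝓝 z] fun w => (l : ℂ) * ((‖f w‖ ^ α : ℝ) : ℂ)) :
    sndDirDeriv f v₁ z + sndDirDeriv f v₂ z =
      (2 * l * α * ‖f z‖ ^ (α - 2)) •
        ((⟪f z, fderiv ℝ f z v₁⟫_ℝ : ℂ) - I * ⟪f z, fderiv ℝ f z v₂⟫_ℝ) := by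
  have hdbar : ∀ v, fderiv ℝ (wirtingerBar f v₁ v₂) z v =
      ((l * α * ‖f z‖ ^ (α - 2) * ⟪f z, fderiv ℝ f z v⟫_ℝ : ℝ) : ℂ) := by
    intro v
    have hrhs : HasFDerivAt (fun w => (l : ℂ) * ((‖f w‖ ^ α : ℝ) : ℂ)) _ z :=
      (ofRealCLM.hasFDerivAt.comp z ((hasFDerivAt_norm_rpow_of_ne_zero hz α).comp z
        (hf.differentiableAt (by simp)).hasFDerivAt)).const_mul (l : ℂ)
    rw [hpde.fderiv_eq, hrhs.fderiv]
    simp only [ContinuousLinearMap.smul_comp, ContinuousLinearMap.comp_smulₛₗ, Real.ringHom_apply,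
      smul_apply, ContinuousLinearMap.comp_apply, coe_innerSL_apply, ofRealCLM_apply, real_smul,
      smul_eq_mul]
    push_cast
    ring
  rw [sndDirDeriv_add_sndDirDeriv_eq_fderiv_wirtingerBar hf, hdbar, hdbar, Complex.real_smul]
  push_cast
  ring

theorem mul_rpow_le_sndDirDeriv_add_sndDirDeriv {f : E → ℂ} {z v₁ v₂ : E} {l α p : ℝ}
    (hp : 3 < p) (hα : 0 ≤ α) (hf : ContDiffAt ℝ 2 f z)
    (hpde : wirtingerBar f v₁ v₂ =ᶠ[𝓝 z] fun w => (l : ℂ) * ((‖f w‖ ^ α : ℝ) : ℂ)) :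
    (4 * p - (2 - α) ^ 2) * ‖f z‖ ^ (p + 2 * α - 2) * l ^ 2 ≤
      sndDirDeriv (fun w => ‖f w‖ ^ p) v₁ z + sndDirDeriv (fun w => ‖f w‖ ^ p) v₂ z := by
  have hdiff : ∀ᶠ w in 𝓝 z, DifferentiableAt ℝ f w :=
    (hf.eventually (by simp)).mono fun w hw => hw.differentiableAt (by simp)
  have hdiff' : ∀ v, DifferentiableAt ℝ (fun w => fderiv ℝ f w v) z := fun v =>
    ((hf.fderiv_right le_rfl).differentiableAt one_ne_zero).clm_apply (differentiableAt_const v)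
  rw [sndDirDeriv_norm_rpow hp hdiff (hdiff' v₁), sndDirDeriv_norm_rpow hp hdiff (hdiff' v₂)]
  rcases eq_or_ne (f z) 0 with h0 | h0
  · simp [h0, Real.zero_rpow (by linarith : p + 2 * α - 2 ≠ 0),
      Real.zero_rpow (by linarith : p - 2 ≠ 0)]
  set F := f z
  have hinner : ⟪F, sndDirDeriv f v₁ z⟫_ℝ + ⟪F, sndDirDeriv f v₂ z⟫_ℝ =
      2 * l * α * ‖F‖ ^ (α - 2) *
        ⟪F, ⟪F, fderiv ℝ f z v₁⟫_ℝ - I * ⟪F, fderiv ℝ f z v₂⟫_ℝ⟫_ℝ := by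
    rw [← inner_add_right, sndDirDeriv_add_sndDirDeriv_of_wirtingerBar_eq hf h0 hpde,
      real_inner_smul_right]
  have hpde_z : fderiv ℝ f z v₁ + I * fderiv ℝ f z v₂ = 2 * (l * ‖F‖ ^ α : ℝ) := by
    have hz := hpde.self_of_nhds
    simp only [wirtingerBar] at hz
    push_cast
    linear_combination 2 * hz
  have hquad := mul_sq_mul_norm_sq_le_of_add_I_mul_eq (p := p) (α := α) h0 hpde_z
  have hN : 0 < ‖F‖ := norm_pos_iff.mpr h0
  have hexp_lhs : ‖F‖ ^ (p + 2 * α - 2) = ‖F‖ ^ (p - 4) * (‖F‖ ^ α) ^ 2 * ‖F‖ ^ 2 := by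
    rw [← Real.rpow_two, ← Real.rpow_two, ← Real.rpow_mul hN.le, ← Real.rpow_add hN,
      ← Real.rpow_add hN]
    ring_nf
  have hexp_p : ‖F‖ ^ (p - 2) = ‖F‖ ^ (p - 4) * ‖F‖ ^ 2 := by
    rw [← Real.rpow_two, ← Real.rpow_add hN]
    ring_nf
  have hexp_α : ‖F‖ ^ (α - 2) * ‖F‖ ^ 2 = ‖F‖ ^ α := by
    rw [← Real.rpow_two, ← Real.rpow_add hN]
    ring_nf
  rw [hexp_lhs, hexp_p]
  linear_combination ‖F‖ ^ (p - 4) * hquad - (p * ‖F‖ ^ (p - 4) * ‖F‖ ^ 2) * hinner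
    - (2 * p * α * l * ‖F‖ ^ (p - 4) *
      ⟪F, ⟪F, fderiv ℝ f z v₁⟫_ℝ - I * ⟪F, fderiv ℝ f z v₂⟫_ℝ⟫_ℝ) * hexp_α

end

theorem nonlinear_pde_laplacian_lower_bound_general
    (n : ℕ) (lam : Fin n → ℝ) (α : ℝ) (hα : 0 ≤ α) (p : ℝ) (hp : 4 ≤ p)
    (f : EuclideanSpace ℂ (Fin n) → ℂ)
    (hf : ContDiffOn ℝ 2 f (ball 0 1))
    (hpde : ∀ k : Fin n, ∀ z ∈ ball (0 : EuclideanSpace ℂ (Fin n)) 1,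
      wzb f k z = (lam k : ℂ) * ((‖f z‖ ^ α : ℝ) : ℂ)) :
    ∀ z ∈ ball (0 : EuclideanSpace ℂ (Fin n)) 1,
      (4 * p - (2 - α) ^ 2) * ‖f z‖ ^ (p + 2 * α - 2) * (∑ k : Fin n, lam k ^ 2) ≤
        lap (fun w => ‖f w‖ ^ p) z := by
  intro z hz
  have hball : ball (0 : EuclideanSpace ℂ (Fin n)) 1 ∈ 𝓝 z := isOpen_ball.mem_nhds hz
  rw [Finset.mul_sum]
  exact Finset.sum_le_sum fun k _ =>
    mul_rpow_le_sndDirDeriv_add_sndDirDeriv (by linarith) hα (hf.contDiffAt hball)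
      (Filter.eventually_of_mem hball (hpde k))

theorem nonlinear_pde_laplacian_lower_bound
    (n : ℕ) (hn : 1 ≤ n) (lam : Fin n → ℝ) (α : ℝ) (hα : 0 ≤ α) (p : ℝ) (hp : 4 ≤ p)
    (f : EuclideanSpace ℂ (Fin n) → ℂ)
    (hf : ContDiffOn ℝ 2 f (ball 0 1))
    (hpde : ∀ k : Fin n, ∀ z ∈ ball (0 : EuclideanSpace ℂ (Fin n)) 1,
      wzb f k z = (lam k : ℂ) * ((‖f z‖ ^ α : ℝ) : ℂ)) :
    ∀ z ∈ ball (0 : EuclideanSpace ℂ (Fin n)) 1,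
      (4 * p - (2 - α) ^ 2) * ‖f z‖ ^ (p + 2 * α - 2) * (∑ k : Fin n, lam k ^ 2) ≤
        lap (fun w => ‖f w‖ ^ p) z :=
  nonlinear_pde_laplacian_lower_bound_general n lam α hα p hp f hf hpde
end
end
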